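/- arXiv:1812.10242 — 2 statements merged into one kernel-verified Lean document; each statement's English description precedes it below -/
import Mathlib

section
/- Let σ be an element of the increasing monoid I. Then there exists a unique strictly increasing sequence of integers 1 ≤ n_1 < n_2 < ⋯ < n_r such that σ = α_{n_r} ∘ α_{n_{r-1}} ∘ ⋯ ∘ α_{n_1}; moreover r = ℓ(σ), the length of σ (the integer ℓ such that σ(n) = n + ℓ for all sufficiently large n). -/
open scoped Classical

noncomputable section

/-- The increasing monoid `I`: the submonoid of `Function.End ℕ+` (functions under
composition) consisting of strictly increasing functions `σ : ℕ+ → ℕ+` such that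
`σ n = n + ℓ` for some `ℓ` and all sufficiently large `n`. -/
def IncMonoid : Submonoid (Function.End ℕ+) where
  carrier := {f | StrictMono f ∧ ∃ (l : ℕ) (N : ℕ+), ∀ n : ℕ+, N ≤ n → ((f n : ℕ) = (n : ℕ) + l)}
  one_mem' := ⟨fun _ _ h => h, 0, 1, fun n _ => by show ((n : ℕ+) : ℕ) = (n : ℕ) + 0; omega⟩
  mul_mem' := by
    rintro f g ⟨hf1, lf, Nf, hf2⟩ ⟨hg1, lg, Ng, hg2⟩
    refine ⟨hf1.comp hg1, lg + lf, max Nf Ng, fun n hn => ?_⟩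
    have h1 : (g n : ℕ) = (n : ℕ) + lg := hg2 n (le_trans (le_max_right _ _) hn)
    have h2 : Nf ≤ g n := by
      rw [← PNat.coe_le_coe, h1]
      have : (Nf : ℕ) ≤ (n : ℕ) := (PNat.coe_le_coe _ _).2 (le_trans (le_max_left _ _) hn)
      omega
    have h3 := hf2 (g n) h2
    show ((f (g n) : ℕ)) = (n : ℕ) + (lg + lf)
    omega

/-- The increasing monoid, as a type. -/
abbrev IncM : Type := IncMonoid

theorem IncM.strictMono (σ : IncM) : StrictMono σ.1 := σ.2.1

theorem IncM.le_apply (σ : IncM) (n : ℕ+) : n ≤ σ.1 n := by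
  induction n using PNat.recOn with
  | one => exact (σ.1 1).one_le
  | succ n ih =>
      have h2 : σ.1 n < σ.1 (n + 1) := σ.strictMono (by rw [← PNat.coe_lt_coe]; push_cast; omega)
      rw [← PNat.coe_le_coe] at *
      rw [← PNat.coe_lt_coe] at h2
      push_cast at *
      omega

/-- The underlying function of the generator `α_k`. -/
def alphaFun (k : ℕ+) : Function.End ℕ+ := fun n => if n < k then n else n + 1

theorem alphaFun_strictMono (k : ℕ+) : StrictMono (alphaFun k) := by
  intro a b hab
  unfold alphaFun
  split_ifs with h1 h2 <;>
    rw [← PNat.coe_lt_coe] at * <;> push_cast at * <;> omega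

theorem alphaFun_mem (k : ℕ+) : alphaFun k ∈ IncMonoid := by
  refine ⟨alphaFun_strictMono k, 1, k, fun n hn => ?_⟩
  unfold alphaFun
  rw [if_neg (not_lt.2 hn)]
  push_cast
  ring

/-- The generator `α_k` of the increasing monoid (`k ≥ 1`). -/
def alpha (k : ℕ+) : IncM := ⟨alphaFun k, alphaFun_mem k⟩

/-- The submonoid `I_{≥ n}` of `I` generated by the `α_i` with `i ≥ n`. -/
def Iges (n : ℕ+) : Submonoid IncM := Submonoid.closure (alpha '' Set.Ici n)

/-- The submonoid `I_{> n}` of `I` generated by the `α_i` with `i > n`. -/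
def Igt (n : ℕ) : Submonoid IncM := Submonoid.closure {s | ∃ i : ℕ+, n < (i : ℕ) ∧ s = alpha i}

/-- The monoid algebra `k[I]` of the increasing monoid. -/
abbrev IncAlg (k : Type*) [Field k] : Type _ := MonoidAlgebra k IncM

/-- The image of `σ ∈ I` in the monoid algebra `k[I]`. -/
abbrev ofInc (k : Type*) [Field k] (σ : IncM) : IncAlg k := MonoidAlgebra.of k IncM σ

/-- A `k[I]`-module is smooth if every vector is fixed by some `I_{>n}`. -/
def IsSmoothMod (k : Type*) [Field k] (M : Type*) [AddCommMonoid M]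
    [Module (IncAlg k) M] : Prop :=
  ∀ x : M, ∃ n : ℕ, ∀ σ ∈ Igt n, ofInc k σ • x = x

/-! ### The principal modules `A^r` -/

/-- Index set for the basis of the principal module `A^r`:
strictly increasing `r`-tuples of positive integers. -/
def Idx (r : ℕ) : Type := {v : Fin r → ℕ+ // StrictMono v}

/-- The action of `σ ∈ I` on the index set of `A^r`. -/
def idxAct {r : ℕ} (σ : IncM) (t : Idx r) : Idx r :=
  ⟨σ.1 ∘ t.1, (IncM.strictMono σ).comp t.2⟩

/-- The representation of the increasing monoid on the principal module `A^r`. -/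
def prinRep (k : Type*) [Field k] (r : ℕ) : Representation k IncM (Idx r →₀ k) where
  toFun σ := Finsupp.lmapDomain k k (idxAct σ)
  map_one' := LinearMap.ext fun v => by
    have h : (idxAct (1 : IncM) : Idx r → Idx r) = id := funext fun t => rfl
    simp [Finsupp.lmapDomain_apply, h, Finsupp.mapDomain_id]
  map_mul' := fun σ τ => LinearMap.ext fun v => by
    have h : (idxAct (σ * τ) : Idx r → Idx r) = (idxAct σ) ∘ (idxAct τ) :=
      funext fun t => rfl
    show Finsupp.lmapDomain k k (idxAct (σ * τ)) v =
      Finsupp.lmapDomain k k (idxAct σ) (Finsupp.lmapDomain k k (idxAct τ) v)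
    simp [Finsupp.lmapDomain_apply, h, Finsupp.mapDomain_comp]

/-- The principal module `A^r`, as a module over the monoid algebra `k[I]`. -/
abbrev PrinMod (k : Type*) [Field k] (r : ℕ) : Type _ := (prinRep k r).asModule

/-- The basis vector `e_t` of the principal module `A^r`. -/
def ePrin (k : Type*) [Field k] {r : ℕ} (t : Idx r) : PrinMod k r :=
  (prinRep k r).asModuleEquiv.symm (Finsupp.single t 1)

/-- The tuple `(1, 2, …, r)` indexing the canonical generator `e_{1,…,r}` of `A^r`. -/
def iotaIdx (r : ℕ) : Idx r :=
  ⟨fun i => ⟨(i : ℕ) + 1, Nat.succ_pos _⟩, fun a b h => by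
    exact Nat.succ_lt_succ h⟩

/-! ### The simple modules `B^n` -/

/-- `σ ∈ I` fixes the natural number `n`, with the convention `σ 0 = 0`. -/
def fixesNat (σ : IncM) (n : ℕ) : Prop := ∀ h : 0 < n, σ.1 ⟨n, h⟩ = ⟨n, h⟩

theorem fixesNat_mul (σ τ : IncM) (n : ℕ) :
    fixesNat (σ * τ) n ↔ fixesNat σ n ∧ fixesNat τ n := by
  rcases Nat.eq_zero_or_pos n with h0 | h0
  · subst h0
    constructor
    · exact fun _ => ⟨fun h => absurd h (lt_irrefl 0), fun h => absurd h (lt_irrefl 0)⟩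
    · exact fun _ h => absurd h (lt_irrefl 0)
  · set p : ℕ+ := ⟨n, h0⟩
    have happ : ∀ h : 0 < n, (σ * τ).1 ⟨n, h⟩ = σ.1 (τ.1 ⟨n, h⟩) := fun _ => rfl
    constructor
    · intro h
      have hfix : σ.1 (τ.1 p) = p := h h0
      have h1 : p ≤ τ.1 p := τ.le_apply p
      have h2 : τ.1 p ≤ σ.1 (τ.1 p) := σ.le_apply _
      have hτp : τ.1 p = p := le_antisymm (h2.trans_eq hfix) h1
      have hσp : σ.1 p = p := by rw [hτp] at hfix; exact hfix
      exact ⟨fun _ => hσp, fun _ => hτp⟩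
    · rintro ⟨hσ, hτ⟩ h
      rw [happ h]
      have := hτ h0
      rw [this, hσ h0]

/-- The representation of the increasing monoid on the simple module `B^n`:
`σ` acts by the identity if `σ(n) = n` (with `σ(0) = 0`) and by `0` otherwise. -/
def bRep (k : Type*) [Field k] (n : ℕ) : Representation k IncM k where
  toFun σ := if fixesNat σ n then 1 else 0
  map_one' := by
    try dsimp only
    rw [if_pos]
    intro h
    rfl
  map_mul' := fun σ τ => by
    try dsimp only
    by_cases hσ : fixesNat σ n
    · by_cases hτ : fixesNat τ n
      · rw [if_pos ((fixesNat_mul σ τ n).2 ⟨hσ, hτ⟩), if_pos hσ, if_pos hτ, one_mul]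
      · rw [if_neg (fun h => hτ ((fixesNat_mul σ τ n).1 h).2), if_pos hσ, if_neg hτ, one_mul]
    · by_cases hτ : fixesNat τ n
      · rw [if_neg (fun h => hσ ((fixesNat_mul σ τ n).1 h).1), if_neg hσ, if_pos hτ, mul_one]
      · rw [if_neg (fun h => hσ ((fixesNat_mul σ τ n).1 h).1), if_neg hσ, if_neg hτ, mul_zero]

/-- The simple module `B^n`, as a module over the monoid algebra `k[I]`. -/
abbrev BMod (k : Type*) [Field k] (n : ℕ) : Type _ := (bRep k n).asModule

/-! A strictly increasing self-map of `ℕ+` is the enumeration of its range, so an element of `I`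
is determined by the finite set of values it misses. Composing with `α_k` on the left adds `k` to
that set, as long as all values already missed are smaller than `k`; hence
`α_{n_r} ∘ ⋯ ∘ α_{n_1}` misses exactly `{n_1, …, n_r}`, which gives existence and uniqueness at
once. Each `α_k` shifts large arguments by one, so the product has length `r`. -/

namespace IncM

theorem mul_apply (σ τ : IncM) (n : ℕ+) : (σ * τ).1 n = σ.1 (τ.1 n) := rfl

def gaps (σ : IncM) : Set ℕ+ := {m | ∀ n, σ.1 n ≠ m}

theorem ext_of_gaps_eq {σ τ : IncM} (h : σ.gaps = τ.gaps) : σ = τ := by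
  refine Subtype.ext ((σ.strictMono.range_inj τ.strictMono).1 (Set.ext fun m => ?_))
  have hm := not_congr (Set.ext_iff.1 h m)
  simp only [gaps, Set.mem_ofPred_eq, not_forall, not_not] at hm
  exact hm

theorem finite_gaps (σ : IncM) : σ.gaps.Finite := by
  obtain ⟨-, l, N, hN⟩ := σ.2
  refine BddAbove.finite ⟨⟨N + l, Nat.add_pos_left N.pos l⟩, fun m hm => ?_⟩
  by_contra! hlt
  have hlt : (N : ℕ) + l < m := not_le.1 hlt
  let p : ℕ+ := ⟨m - l, by omega⟩
  refine hm p (PNat.coe_injective ?_)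
  rw [hN p (show (N : ℕ) ≤ m - l by omega)]
  simp only [p, PNat.mk_coe]
  omega

theorem mem_gaps_mul {σ τ : IncM} {m : ℕ+} :
    m ∈ (σ * τ).gaps ↔ m ∈ σ.gaps ∨ ∃ p ∈ τ.gaps, σ.1 p = m := by
  simp only [gaps, Set.mem_ofPred_eq, mul_apply]
  constructor
  · refine fun h => or_iff_not_imp_left.2 fun hσ => ?_
    push Not at hσ
    obtain ⟨p, rfl⟩ := hσ
    exact ⟨p, fun n hn => h n (by rw [hn]), rfl⟩
  · rintro (h | ⟨p, hp, rfl⟩) n hn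
    · exact h _ hn
    · exact hp n (σ.strictMono.injective hn)

end IncM

theorem alpha_apply_of_lt {k n : ℕ+} (h : n < k) : (alpha k).1 n = n := if_pos h

theorem alpha_apply_of_le {k n : ℕ+} (h : k ≤ n) : (alpha k).1 n = n + 1 :=
  if_neg (not_lt.2 h)

theorem gaps_alpha (k : ℕ+) : (alpha k).gaps = {k} := by
  ext m
  simp only [IncM.gaps, Set.mem_ofPred_eq, Set.mem_singleton_iff]
  constructor
  · intro h
    by_contra hmk
    rcases lt_or_gt_of_ne hmk with hlt | hgt
    · exact h m (alpha_apply_of_lt hlt)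
    · obtain ⟨p, rfl⟩ := PNat.exists_eq_succ_of_ne_one (ne_bot_of_gt hgt)
      exact h p (alpha_apply_of_le (PNat.lt_add_one_iff.1 hgt))
  · rintro rfl n
    rcases lt_or_ge n m with h | h
    · rw [alpha_apply_of_lt h]; exact h.ne
    · rw [alpha_apply_of_le h]; exact (PNat.lt_add_one_iff.2 h).ne'

theorem gaps_alpha_mul {k : ℕ+} {τ : IncM} (hτ : ∀ m ∈ τ.gaps, m < k) :
    (alpha k * τ).gaps = insert k τ.gaps := by
  ext m
  rw [IncM.mem_gaps_mul, gaps_alpha, Set.mem_insert_iff, Set.mem_singleton_iff]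
  refine or_congr_right ⟨?_, fun hm => ⟨m, hm, alpha_apply_of_lt (hτ m hm)⟩⟩
  rintro ⟨p, hp, rfl⟩
  rwa [alpha_apply_of_lt (hτ p hp)]

theorem gaps_prod_alpha {L : List ℕ+} (hL : L.Pairwise (· < ·)) :
    (L.reverse.map alpha).prod.gaps = {m | m ∈ L} := by
  induction L using List.reverseRecOn with
  | nil =>
    ext m
    simp only [List.reverse_nil, List.map_nil, List.prod_nil, List.not_mem_nil, Set.mem_ofPred_eq,
      iff_false]
    exact fun h => h m rfl
  | append_singleton L k ih =>
    obtain ⟨hL, -, hlt⟩ := List.pairwise_append.1 hL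
    have ih := ih hL
    rw [List.reverse_append, List.reverse_singleton, List.singleton_append, List.map_cons,
      List.prod_cons, gaps_alpha_mul fun m hm => hlt m (by rwa [ih] at hm) k (by simp), ih]
    ext m
    simp [or_comm]

theorem exists_prod_alpha_apply_eq_add_length (L : List ℕ+) :
    ∃ N : ℕ+, ∀ n : ℕ+, N ≤ n → (((L.map alpha).prod.1 n : ℕ+) : ℕ) = n + L.length := by
  induction L with
  | nil => exact ⟨1, fun n _ => rfl⟩
  | cons k L ih =>
    obtain ⟨N, hN⟩ := ih
    refine ⟨max N k, fun n hn => ?_⟩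
    have hk : k ≤ (L.map alpha).prod.1 n :=
      (le_max_right N k).trans (hn.trans (IncM.le_apply _ n))
    rw [List.map_cons, List.prod_cons, IncM.mul_apply, alpha_apply_of_le hk, PNat.add_coe,
      hN n ((le_max_left N k).trans hn), List.length_cons]
    rfl

theorem exists_prod_alpha_eq (σ : IncM) :
    ∃ L : List ℕ+, L.Pairwise (· < ·) ∧ σ = (L.reverse.map alpha).prod := by
  let L := σ.finite_gaps.toFinset.sort
  have hL : L.Pairwise (· < ·) := (Finset.sortedLT_sort _).pairwise
  refine ⟨L, hL, IncM.ext_of_gaps_eq ?_⟩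
  rw [gaps_prod_alpha hL]
  ext m
  simp [L]

theorem eq_of_prod_alpha_eq {L L' : List ℕ+} (hL : L.Pairwise (· < ·)) (hL' : L'.Pairwise (· < ·))
    (h : (L.reverse.map alpha).prod = (L'.reverse.map alpha).prod) : L = L' := by
  refine hL.sortedLT.eq_of_mem_iff hL'.sortedLT fun m => ?_
  have h := congrArg IncM.gaps h
  rw [gaps_prod_alpha hL, gaps_prod_alpha hL'] at h
  exact Set.ext_iff.1 h m

/-- Every `σ` in the increasing monoid is uniquely a product
`α_{n_r} ∘ ⋯ ∘ α_{n_1}` with `n_1 < n_2 < ⋯ < n_r`, and `r = ℓ(σ)`. -/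
theorem exists_unique_strict_factorization (σ : IncM) :
    (∃! L : List ℕ+, L.Pairwise (· < ·) ∧ σ = (L.reverse.map alpha).prod) ∧
      ∀ L : List ℕ+, L.Pairwise (· < ·) → σ = (L.reverse.map alpha).prod →
        ∀ (l : ℕ) (N : ℕ+), (∀ n : ℕ+, N ≤ n → ((σ.1 n : ℕ) = (n : ℕ) + l)) →
          L.length = l := by
  refine ⟨?_, fun L _ hσ l N hN => ?_⟩
  · obtain ⟨L, hL, hσ⟩ := exists_prod_alpha_eq σ
    exact ⟨L, ⟨hL, hσ⟩, fun L' ⟨hL', hσ'⟩ => eq_of_prod_alpha_eq hL' hL (hσ'.symm.trans hσ)⟩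
  · obtain ⟨N', hN'⟩ := exists_prod_alpha_apply_eq_add_length L.reverse
    have h₁ := hN (max N N') (le_max_left N N')
    have h₂ := hN' (max N N') (le_max_right N N')
    rw [hσ] at h₁
    rw [List.length_reverse] at h₂
    omega

end
end

section
/- Fix a field k and r ∈ ℕ. Order the strictly increasing r-tuples of positive integers lexicographically with larger positions compared first: (i_1,…,i_r) < (j_1,…,j_r) if i_k < j_k where k is the maximal index with i_k ≠ j_k. For a nonzero x ∈ A^r, let in(x) denote the basis vector e_t for t the maximal tuple (in this order) occurring with nonzero coefficient in x; for a k[I]-submodule M of A^r let in(M) be the k-span of {in(x) : 0 ≠ x ∈ M}. Then: if M ⊆ N are k[I]-submodules of A^r with in(M) = in(N), then M = N. -/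
/-! `tupLT` is the colexicographic order on `Fin r → ℕ+` restricted to increasing tuples, hence a
well-order, so every nonzero vector has an initial term and we may induct on it. Given `x ∈ N` with
initial index `t`, the hypothesis `in(M) = in(N)` provides `y ∈ M` with the same initial index;
subtracting the multiple of `y` that cancels the `t`-coefficient leaves an element of `N` with a
strictly smaller initial index (or zero), which lies in `M` by induction, hence so does `x`. -/

open scoped Classical

noncomputable section

/-- The lexicographic order on strictly increasing tuples in which larger positions
are compared first: `t < s` iff `t K < s K` for the largest index `K` where they
differ. -/
def tupLT {r : ℕ} (t s : Idx r) : Prop :=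
  ∃ K : Fin r, t.1 K < s.1 K ∧ ∀ j : Fin r, K < j → t.1 j = s.1 j

/-- `t` indexes the initial term of `x`: `t` lies in the support of `x` and is the
largest element of the support. -/
def IsLead {k : Type*} [Field k] {r : ℕ} (x : Idx r →₀ k) (t : Idx r) : Prop :=
  t ∈ x.support ∧ ∀ s ∈ x.support, s ≠ t → tupLT s t

/-- The set of indices of initial terms of nonzero elements of a `k[I]`-submodule of
`A^r`. -/
def leadSet (k : Type*) [Field k] {r : ℕ}
    (M : Submodule (IncAlg k) (PrinMod k r)) : Set (Idx r) :=
  {t | ∃ x ∈ M, x ≠ 0 ∧ IsLead ((prinRep k r).asModuleEquiv x) t}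

/-- The initial submodule `in(M)`: the span of the initial terms of the nonzero
elements of `M`. -/
def initialSubmodule (k : Type*) [Field k] {r : ℕ}
    (M : Submodule (IncAlg k) (PrinMod k r)) : Submodule k (Idx r →₀ k) :=
  Submodule.span k ((fun t => Finsupp.single t (1 : k)) '' leadSet k M)

section LeadingTerms

variable {r : ℕ}

theorem tupLT_iff_toColex_lt (t s : Idx r) : tupLT t s ↔ toColex t.1 < toColex s.1 :=
  exists_congr fun _ => and_comm

theorem wellFounded_tupLT : WellFounded (tupLT (r := r)) :=
  Subrelation.wf (fun {t s} => (tupLT_iff_toColex_lt t s).1)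
    (InvImage.wf (fun t : Idx r => toColex t.1) wellFounded_lt)

variable {k : Type*} [Field k]

theorem exists_isLead {x : Idx r →₀ k} (hx : x ≠ 0) : ∃ t, IsLead x t := by
  obtain ⟨t, ht, hmax⟩ :=
    x.support.exists_max_image (fun t : Idx r => toColex t.1) (Finsupp.support_nonempty_iff.2 hx)
  refine ⟨t, ht, fun s hs hst => (tupLT_iff_toColex_lt s t).2 ((hmax s hs).lt_of_ne ?_)⟩
  exact fun h => hst (Subtype.ext (toColex.injective h))

theorem IsLead.ne_zero {x : Idx r →₀ k} {t : Idx r} (h : IsLead x t) : x ≠ 0 :=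
  Finsupp.support_nonempty_iff.1 ⟨t, h.1⟩

theorem IsLead.smul {x : Idx r →₀ k} {t : Idx r} (h : IsLead x t) {c : k} (hc : c ≠ 0) :
    IsLead (c • x) t := by
  rw [IsLead, Finsupp.support_smul_eq hc]
  exact h

theorem IsLead.tupLT_of_sub {x y : Idx r →₀ k} {s t : Idx r} (hx : IsLead x t) (hy : IsLead y t)
    (hxy : x t = y t) (hs : IsLead (x - y) s) : tupLT s t := by
  have hst : s ≠ t := by
    rintro rfl
    exact Finsupp.mem_support_iff.1 hs.1 (by rw [Finsupp.sub_apply, hxy, sub_self])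
  rcases Finset.mem_union.1 (Finsupp.support_sub hs.1) with hsx | hsy
  · exact hx.2 s hsx hst
  · exact hy.2 s hsy hst

theorem Submodule.eq_of_le_of_forall_isLead {V W : Submodule k (Idx r →₀ k)} (hVW : V ≤ W)
    (hlead : ∀ w ∈ W, ∀ t, IsLead w t → ∃ v ∈ V, IsLead v t) : V = W := by
  suffices key : ∀ t, ∀ w ∈ W, IsLead w t → w ∈ V by
    refine le_antisymm hVW fun w hw => ?_
    by_cases hw0 : w = 0
    · exact hw0 ▸ V.zero_mem
    obtain ⟨t, ht⟩ := exists_isLead hw0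
    exact key t w hw ht
  intro t
  induction t using wellFounded_tupLT.induction with
  | _ t ih =>
  intro w hw hwt
  obtain ⟨v, hv, hvt⟩ := hlead w hw t hwt
  have hvt0 : v t ≠ 0 := Finsupp.mem_support_iff.1 hvt.1
  set c := w t / v t
  have hc : c ≠ 0 := div_ne_zero (Finsupp.mem_support_iff.1 hwt.1) hvt0
  rw [← sub_add_cancel w (c • v)]
  refine V.add_mem ?_ (V.smul_mem c hv)
  by_cases hrem : w - c • v = 0
  · exact hrem ▸ V.zero_mem
  obtain ⟨s, hs⟩ := exists_isLead hrem
  have hcv : w t = (c • v) t := by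
    rw [Finsupp.smul_apply, smul_eq_mul, div_mul_cancel₀ _ hvt0]
  exact ih s (hwt.tupLT_of_sub (hvt.smul hc) hcv hs) _ (W.sub_mem hw (W.smul_mem c (hVW hv))) hs

end LeadingTerms

theorem single_mem_initialSubmodule_iff {k : Type*} [Field k] {r : ℕ}
    (M : Submodule (IncAlg k) (PrinMod k r)) (t : Idx r) :
    Finsupp.single t (1 : k) ∈ initialSubmodule k M ↔ t ∈ leadSet k M := by
  rw [initialSubmodule, ← Finsupp.supported_eq_span_single, Finsupp.mem_supported,
    Finsupp.support_single t one_ne_zero, Finset.coe_singleton, Set.singleton_subset_iff]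

/-- Gröbner lemma: if `M ⊆ N` are `k[I]`-submodules of `A^r` with
`in(M) = in(N)`, then `M = N`. -/
theorem groebner_initial_submodule (k : Type*) [Field k] (r : ℕ)
    (M N : Submodule (IncAlg k) (PrinMod k r)) (hMN : M ≤ N)
    (h : initialSubmodule k M = initialSubmodule k N) : M = N := by
  have hlead : leadSet k M = leadSet k N := Set.ext fun t => by
    rw [← single_mem_initialSubmodule_iff, h, single_mem_initialSubmodule_iff]
  set e := (prinRep k r).asModuleEquiv.toLinearMap
  suffices (M.restrictScalars k).map e = (N.restrictScalars k).map e from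
    Submodule.restrictScalars_injective k _ _
      (Submodule.map_injective_of_injective (prinRep k r).asModuleEquiv.injective this)
  refine Submodule.eq_of_le_of_forall_isLead (Submodule.map_mono hMN) ?_
  rintro _ ⟨x, hxN, rfl⟩ t hxt
  have htN : t ∈ leadSet k N := ⟨x, hxN, fun hx => hxt.ne_zero (by rw [hx, map_zero]), hxt⟩
  obtain ⟨y, hyM, -, hyt⟩ := hlead ▸ htN
  exact ⟨e y, ⟨y, hyM, rfl⟩, hyt⟩

end
end
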